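/- arXiv:1805.06679 — 5 statements merged into one kernel-verified Lean document; each statement's English description precedes it below -/
import Mathlib

section
/- Theorem (sufficient condition for symplecticity of one-stage ERKN methods): If the coefficients c₁, b₁, b̄₁ of a one-stage explicit ERKN method satisfy the symplecticity conditions for some d₁ ∈ ℝ, then for every stepsize h > 0, every real diagonal d×d matrix Ω with nonnegative entries, and every g̃ of gradient form g̃ = −∇U with U : ℝ^d → ℝ smooth, the one-step map Φₕ : ℝ^{2d} → ℝ^{2d} is symplectic: its Jacobian satisfies (DΦₕ(q,p))ᵀ J (DΦₕ(q,p)) = J for all (q,p), where J = [[0, I_d], [−I_d, 0]] is the canonical symplectic matrix. -/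
noncomputable section

/-- `sinc x = sin x / x`, with `sinc 0 = 1`. -/
def sinc (x : ℝ) : ℝ := if x = 0 then 1 else Real.sin x / x

/-- One step of a one-stage explicit ERKN method. -/
def erknStep (d : ℕ) (c1 : ℝ) (b1 bb1 : ℝ → ℝ) (h : ℝ) (Ω : Fin d → ℝ)
    (gt : (Fin d → ℝ) → (Fin d → ℝ)) (qp : (Fin d → ℝ) × (Fin d → ℝ)) :
    (Fin d → ℝ) × (Fin d → ℝ) :=
  let Q : Fin d → ℝ := fun j =>
    Real.cos (c1 * h * Ω j) * qp.1 j + h * c1 * sinc (c1 * h * Ω j) * qp.2 j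
  (fun j => Real.cos (h * Ω j) * qp.1 j + h * sinc (h * Ω j) * qp.2 j
      + h ^ 2 * bb1 (h * Ω j) * gt Q j,
   fun j => -(h * Ω j ^ 2 * sinc (h * Ω j)) * qp.1 j + Real.cos (h * Ω j) * qp.2 j
      + h * b1 (h * Ω j) * gt Q j)

/-- The canonical symplectic bilinear form ω((q₁,p₁),(q₂,p₂)) = ⟨q₁,p₂⟩ − ⟨p₁,q₂⟩
on ℝ^d × ℝ^d; a map Φ satisfies (DΦ)ᵀ J (DΦ) = J iff it preserves this form
on all pairs of tangent vectors. -/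
def sympForm (d : ℕ) (u v : (Fin d → ℝ) × (Fin d → ℝ)) : ℝ :=
  ∑ j, (u.1 j * v.2 j - u.2 j * v.1 j)

lemma mul_sinc (x : ℝ) : x * sinc x = Real.sin x := by
  unfold sinc
  split
  · simp [*]
  · field_simp

lemma clm_eq_sum_single {d : ℕ} (T : (Fin d → ℝ) →L[ℝ] ℝ) (w : Fin d → ℝ) :
    T w = ∑ i, w i * T (Pi.single i 1) := by
  conv_lhs => rw [pi_eq_sum_univ w]
  rw [map_sum]
  refine Finset.sum_congr rfl fun i _ => ?_
  rw [map_smul, smul_eq_mul]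
  congr 1
  congr 1
  funext j
  simp [Pi.single_apply, eq_comm]

lemma cos_sq_aux (h w : ℝ) :
    Real.cos (h * w) ^ 2 + (h * w ^ 2 * sinc (h * w)) * (h * sinc (h * w)) = 1 := by
  have hs : (h * w) * sinc (h * w) = Real.sin (h * w) := mul_sinc (h * w)
  have hp := Real.sin_sq_add_cos_sq (h * w)
  linear_combination hp + (h * w * sinc (h * w) + Real.sin (h * w)) * hs

lemma erkn_alg (hd C S D A B β β' u1 u2 v1 v2 gu gv : ℝ)
    (r1 : C ^ 2 + D * S = 1) (r2 : β * C + β' * D = hd * A) (r3 : β * S - β' * C = hd * B) :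
    (C * u1 + S * u2 + β' * gu) * (-D * v1 + C * v2 + β * gv)
      - (-D * u1 + C * u2 + β * gu) * (C * v1 + S * v2 + β' * gv)
    = (u1 * v2 - u2 * v1) + hd * ((A * u1 + B * u2) * gv - gu * (A * v1 + B * v2)) := by
  linear_combination (u1 * v2 - u2 * v1) * r1 + (gv * u1 - gu * v1) * r2
    + (gv * u2 - gu * v2) * r3

open ContinuousLinearMap

/-- if the coefficients of a one-stage explicit ERKN method satisfy
the symplecticity conditions for some d₁ ∈ ℝ, then for every h > 0, every diagonal
Ω ≥ 0 and every g̃ = −∇U with U smooth, the one-step map Φₕ is symplectic. -/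
theorem erkn_symplectic_of_conditions (c1 : ℝ) (hc1 : c1 ∈ Set.Icc (0 : ℝ) 1)
    (b1 bb1 : ℝ → ℝ) (d1 : ℝ)
    (hsympl : ∀ x : ℝ, 0 ≤ x →
      Real.cos x * b1 x + x ^ 2 * sinc x * bb1 x = d1 * Real.cos (c1 * x) ∧
      sinc x * b1 x - Real.cos x * bb1 x = c1 * d1 * sinc (c1 * x)) :
    ∀ (d : ℕ) (h : ℝ), 0 < h → ∀ Ω : Fin d → ℝ, (∀ j, 0 ≤ Ω j) →
    ∀ U : (Fin d → ℝ) → ℝ, ContDiff ℝ (⊤ : ℕ∞) U →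
    ∀ gt : (Fin d → ℝ) → (Fin d → ℝ),
      (∀ q j, gt q j = -(fderiv ℝ U q (Pi.single j 1))) →
    ∀ qp u v,
      sympForm d (fderiv ℝ (erknStep d c1 b1 bb1 h Ω gt) qp u)
        (fderiv ℝ (erknStep d c1 b1 bb1 h Ω gt) qp v) = sympForm d u v := by
  intro d h hh Ω hΩ U hU gt hgt qp u v
  have hgteq : gt = fun q j => -(fderiv ℝ U q (Pi.single j 1)) :=
    funext fun q => funext fun j => hgt q j
  subst hgteq
  set g : (Fin d → ℝ) → (Fin d → ℝ) := fun q j => -(fderiv ℝ U q (Pi.single j 1)) with hg_def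
  -- smoothness of g
  have hgC : ContDiff ℝ (⊤ : ℕ∞) g := by
    rw [hg_def]
    refine contDiff_pi.2 fun j => ?_
    exact ((ContinuousLinearMap.apply ℝ ℝ (Pi.single j 1)).contDiff.comp
      (hU.fderiv_right (m := (⊤ : ℕ∞)) (by simp))).neg
  -- the inner-stage linear map
  set Qlin : ((Fin d → ℝ) × (Fin d → ℝ)) →L[ℝ] (Fin d → ℝ) :=
    ContinuousLinearMap.pi (fun j : Fin d =>
      Real.cos (c1 * h * Ω j) • ((proj j).comp (fst ℝ (Fin d → ℝ) (Fin d → ℝ))) +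
      (h * c1 * sinc (c1 * h * Ω j)) • ((proj j).comp (snd ℝ (Fin d → ℝ) (Fin d → ℝ)))) with hQlin
  have hQapp : ∀ (w : (Fin d → ℝ) × (Fin d → ℝ)) (j : Fin d),
      Qlin w j = Real.cos (c1 * h * Ω j) * w.1 j + h * c1 * sinc (c1 * h * Ω j) * w.2 j := by
    intro w j; simp [hQlin]
  -- derivative of g at the inner stage point
  set G : (Fin d → ℝ) →L[ℝ] (Fin d → ℝ) := fderiv ℝ g (Qlin qp) with hG
  have hGat : HasFDerivAt g G (Qlin qp) :=
    ((hgC.differentiable (by simp)) (Qlin qp)).hasFDerivAt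
  have hQcomp : HasFDerivAt (fun w => g (Qlin w)) (G.comp Qlin) qp :=
    hGat.comp qp Qlin.hasFDerivAt
  -- explicit derivative of the step
  set L1 : ((Fin d → ℝ) × (Fin d → ℝ)) →L[ℝ] (Fin d → ℝ) :=
    ContinuousLinearMap.pi (fun j : Fin d =>
      Real.cos (h * Ω j) • ((proj j).comp (fst ℝ (Fin d → ℝ) (Fin d → ℝ))) +
      (h * sinc (h * Ω j)) • ((proj j).comp (snd ℝ (Fin d → ℝ) (Fin d → ℝ))) +
      (h ^ 2 * bb1 (h * Ω j)) • ((proj j).comp (G.comp Qlin))) with hL1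
  set L2 : ((Fin d → ℝ) × (Fin d → ℝ)) →L[ℝ] (Fin d → ℝ) :=
    ContinuousLinearMap.pi (fun j : Fin d =>
      (-(h * Ω j ^ 2 * sinc (h * Ω j))) • ((proj j).comp (fst ℝ (Fin d → ℝ) (Fin d → ℝ))) +
      Real.cos (h * Ω j) • ((proj j).comp (snd ℝ (Fin d → ℝ) (Fin d → ℝ))) +
      (h * b1 (h * Ω j)) • ((proj j).comp (G.comp Qlin))) with hL2
  -- rewrite the step in terms of Qlin
  have heq : erknStep d c1 b1 bb1 h Ω g = fun w : (Fin d → ℝ) × (Fin d → ℝ) =>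
      ((fun j => Real.cos (h * Ω j) * w.1 j + h * sinc (h * Ω j) * w.2 j
          + h ^ 2 * bb1 (h * Ω j) * g (Qlin w) j),
       (fun j => -(h * Ω j ^ 2 * sinc (h * Ω j)) * w.1 j + Real.cos (h * Ω j) * w.2 j
          + h * b1 (h * Ω j) * g (Qlin w) j)) := by
    funext w
    simp only [erknStep]
    have hq : (fun j => Real.cos (c1 * h * Ω j) * w.1 j
        + h * c1 * sinc (c1 * h * Ω j) * w.2 j) = Qlin w :=
      funext fun j => (hQapp w j).symm
    rw [hq]
  have hd1 : HasFDerivAt (fun w : (Fin d → ℝ) × (Fin d → ℝ) =>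
      (fun j => Real.cos (h * Ω j) * w.1 j + h * sinc (h * Ω j) * w.2 j
        + h ^ 2 * bb1 (h * Ω j) * g (Qlin w) j)) L1 qp := by
    apply hasFDerivAt_pi'.2
    intro j
    have : (proj j).comp L1 =
        Real.cos (h * Ω j) • ((proj j).comp (fst ℝ (Fin d → ℝ) (Fin d → ℝ))) +
        (h * sinc (h * Ω j)) • ((proj j).comp (snd ℝ (Fin d → ℝ) (Fin d → ℝ))) +
        (h ^ 2 * bb1 (h * Ω j)) • ((proj j).comp (G.comp Qlin)) := by
      rw [hL1, ContinuousLinearMap.proj_pi]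
    rw [this]
    have e1 : HasFDerivAt (fun w : (Fin d → ℝ) × (Fin d → ℝ) => w.1 j)
        ((proj j).comp (fst ℝ (Fin d → ℝ) (Fin d → ℝ))) qp :=
      ((proj j).comp (fst ℝ (Fin d → ℝ) (Fin d → ℝ))).hasFDerivAt
    have e2 : HasFDerivAt (fun w : (Fin d → ℝ) × (Fin d → ℝ) => w.2 j)
        ((proj j).comp (snd ℝ (Fin d → ℝ) (Fin d → ℝ))) qp :=
      ((proj j).comp (snd ℝ (Fin d → ℝ) (Fin d → ℝ))).hasFDerivAt
    have e3 : HasFDerivAt (fun w : (Fin d → ℝ) × (Fin d → ℝ) => g (Qlin w) j)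
        ((proj j).comp (G.comp Qlin)) qp := by
      have := ((ContinuousLinearMap.proj (R := ℝ) (φ := fun _ : Fin d => ℝ)
        j).hasFDerivAt (x := g (Qlin qp))).comp qp hQcomp
      exact this
    exact ((e1.const_mul (Real.cos (h * Ω j))).add (e2.const_mul (h * sinc (h * Ω j)))).add
      (e3.const_mul (h ^ 2 * bb1 (h * Ω j)))
  have hd2 : HasFDerivAt (fun w : (Fin d → ℝ) × (Fin d → ℝ) =>
      (fun j => -(h * Ω j ^ 2 * sinc (h * Ω j)) * w.1 j + Real.cos (h * Ω j) * w.2 j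
        + h * b1 (h * Ω j) * g (Qlin w) j)) L2 qp := by
    apply hasFDerivAt_pi'.2
    intro j
    have : (proj j).comp L2 =
        (-(h * Ω j ^ 2 * sinc (h * Ω j))) • ((proj j).comp (fst ℝ (Fin d → ℝ) (Fin d → ℝ))) +
        Real.cos (h * Ω j) • ((proj j).comp (snd ℝ (Fin d → ℝ) (Fin d → ℝ))) +
        (h * b1 (h * Ω j)) • ((proj j).comp (G.comp Qlin)) := by
      rw [hL2, ContinuousLinearMap.proj_pi]
    rw [this]
    have e1 : HasFDerivAt (fun w : (Fin d → ℝ) × (Fin d → ℝ) => w.1 j)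
        ((proj j).comp (fst ℝ (Fin d → ℝ) (Fin d → ℝ))) qp :=
      ((proj j).comp (fst ℝ (Fin d → ℝ) (Fin d → ℝ))).hasFDerivAt
    have e2 : HasFDerivAt (fun w : (Fin d → ℝ) × (Fin d → ℝ) => w.2 j)
        ((proj j).comp (snd ℝ (Fin d → ℝ) (Fin d → ℝ))) qp :=
      ((proj j).comp (snd ℝ (Fin d → ℝ) (Fin d → ℝ))).hasFDerivAt
    have e3 : HasFDerivAt (fun w : (Fin d → ℝ) × (Fin d → ℝ) => g (Qlin w) j)
        ((proj j).comp (G.comp Qlin)) qp := by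
      have := ((ContinuousLinearMap.proj (R := ℝ) (φ := fun _ : Fin d => ℝ)
        j).hasFDerivAt (x := g (Qlin qp))).comp qp hQcomp
      exact this
    exact ((e1.const_mul (-(h * Ω j ^ 2 * sinc (h * Ω j)))).add
      (e2.const_mul (Real.cos (h * Ω j)))).add (e3.const_mul (h * b1 (h * Ω j)))
  have hL : HasFDerivAt (erknStep d c1 b1 bb1 h Ω g) (L1.prod L2) qp := by
    rw [heq]; exact HasFDerivAt.prodMk hd1 hd2
  -- second derivative of U and symmetry
  set f2 : (Fin d → ℝ) →L[ℝ] (Fin d → ℝ) →L[ℝ] ℝ := fderiv ℝ (fderiv ℝ U) (Qlin qp) with hf2def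
  have hf2 : HasFDerivAt (fderiv ℝ U) f2 (Qlin qp) :=
    (((hU.fderiv_right (m := (⊤ : ℕ∞)) (by simp)).differentiable (by simp)) (Qlin qp)).hasFDerivAt
  have hGexp : HasFDerivAt g (ContinuousLinearMap.pi (fun j : Fin d =>
      -((ContinuousLinearMap.apply ℝ ℝ (Pi.single j 1)).comp f2))) (Qlin qp) := by
    apply hasFDerivAt_pi'.2
    intro j
    rw [ContinuousLinearMap.proj_pi]
    have := ((ContinuousLinearMap.apply ℝ ℝ (Pi.single j 1)).hasFDerivAt
      (x := fderiv ℝ U (Qlin qp))).comp (Qlin qp) hf2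
    exact this.neg
  have hGval : ∀ (z : Fin d → ℝ) (j : Fin d), G z j = -(f2 z (Pi.single j 1)) := by
    intro z j
    rw [hG, hGexp.fderiv]
    simp
  have hsymm : ∀ z w : Fin d → ℝ, f2 z w = f2 w z := fun z w =>
    second_derivative_symmetric (fun y => ((hU.differentiable (by simp)) y).hasFDerivAt) hf2 z w
  have hsum : ∀ z w : Fin d → ℝ, ∑ j, w j * G z j = ∑ j, z j * G w j := by
    have key : ∀ z w : Fin d → ℝ, ∑ j, w j * G z j = -(f2 z w) := by
      intro z w
      simp only [hGval, mul_neg]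
      rw [clm_eq_sum_single (f2 z) w, ← Finset.sum_neg_distrib]
    intro z w
    rw [key z w, key w z, hsymm z w]
  -- final computation
  rw [hL.fderiv]
  simp only [sympForm, ContinuousLinearMap.prod_apply, hL1, hL2, ContinuousLinearMap.pi_apply,
    ContinuousLinearMap.add_apply, ContinuousLinearMap.coe_smul', Pi.smul_apply,
    ContinuousLinearMap.coe_comp', Function.comp_apply, ContinuousLinearMap.coe_fst',
    ContinuousLinearMap.coe_snd', ContinuousLinearMap.proj_apply, smul_eq_mul]
  have hzero : ∑ j, h * d1 * (Qlin u j * G (Qlin v) j - G (Qlin u) j * Qlin v j) = 0 := by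
    rw [← Finset.mul_sum, Finset.sum_sub_distrib, hsum (Qlin v) (Qlin u)]
    rw [show (∑ j, G (Qlin u) j * Qlin v j) = ∑ j, Qlin v j * G (Qlin u) j from
      Finset.sum_congr rfl fun j _ => mul_comm _ _]
    rw [sub_self, mul_zero]
  trans (∑ j, ((u.1 j * v.2 j - u.2 j * v.1 j)
      + h * d1 * (Qlin u j * G (Qlin v) j - G (Qlin u) j * Qlin v j)))
  · refine Finset.sum_congr rfl fun j _ => ?_
    obtain ⟨r2, r3⟩ := hsympl (h * Ω j) (mul_nonneg hh.le (hΩ j))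
    simp only [← mul_assoc] at r2 r3
    have r1c : Real.cos (h * Ω j) ^ 2
        + (h * Ω j ^ 2 * sinc (h * Ω j)) * (h * sinc (h * Ω j)) = 1 := by
      have := cos_sq_aux h (Ω j)
      linear_combination this
    have r2c : (h * b1 (h * Ω j)) * Real.cos (h * Ω j)
        + (h ^ 2 * bb1 (h * Ω j)) * (h * Ω j ^ 2 * sinc (h * Ω j))
        = (h * d1) * Real.cos (c1 * h * Ω j) := by linear_combination h * r2
    have r3c : (h * b1 (h * Ω j)) * (h * sinc (h * Ω j))
        - (h ^ 2 * bb1 (h * Ω j)) * Real.cos (h * Ω j)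
        = (h * d1) * (h * c1 * sinc (c1 * h * Ω j)) := by linear_combination h ^ 2 * r3
    rw [hQapp u j, hQapp v j]
    exact erkn_alg (h * d1) (Real.cos (h * Ω j)) (h * sinc (h * Ω j))
      (h * Ω j ^ 2 * sinc (h * Ω j)) (Real.cos (c1 * h * Ω j)) (h * c1 * sinc (c1 * h * Ω j))
      (h * b1 (h * Ω j)) (h ^ 2 * bb1 (h * Ω j)) (u.1 j) (u.2 j) (v.1 j) (v.2 j)
      (G (Qlin u) j) (G (Qlin v) j) r1c r2c r3c
  · rw [Finset.sum_add_distrib, hzero, add_zero]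
end
end

section
/- Proposition (Taylor expansion of the symbol of the operator L^k for symmetric ERKN coefficients): Suppose the ERKN coefficients satisfy the symmetry conditions, with b̄₁ = b̄₁(hω) ≠ 0 and cos(hω/2) ≠ 0, and let L be the scalar symbol defined below, analytic near z = 0. Then: (i) if a = ω (resp. a = −ω), then L(0) = 0, L'(0) = 2i·sin(hω/2)/b̄₁ (resp. L'(0) = −2i·sin(hω/2)/b̄₁) and L''(0) = cos(hω)·sec(hω/2)/b̄₁; (ii) for arbitrary real a, L(0) = 2·sec(hω/2)·sin((h/2)(ω + a))·sin((h/2)(ω − a))/b̄₁ and L'(0) = i·sec(hω/2)·sin(ha)/b̄₁. -/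
/-!
With `x = hω`, `s = sin (x/2)`, `c = cos (x/2)`, the symmetry condition at `c₁ = 1/2` says
`c · b̄₁ · x = s · b₁`. Substituting it, and writing `E = e^{iha} e^z`, the symbols collapse to
`L₁ = x c (E - 1) / (s (E + 1))`, `L₂ = 2 c E / (E + 1)` and
`L(z) = (cosh (iha + z) - cos x) / (b̄₁ c)` wherever `E ≠ -1`, in particular near `z = 0`.
The Taylor coefficients are then read off from `cosh (iha) = cos (ha)`, `sinh (iha) = i sin (ha)`
and the product formula for `cos (ha) - cos (hω)`.
-/

noncomputable section

/-- the scalar symbol L₁ of the operator L₁^k at frequency ω and phase a = k·ω -/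
def symbL1 (h ω a : ℝ) (b1 bb1 : ℝ) (z : ℂ) : ℂ :=
  (Complex.exp (Complex.I * (h * a : ℝ)) * Complex.exp z - (Real.cos (h * ω) : ℂ)
      - ((h * ω * Real.sin (h * ω) * (bb1 / b1) : ℝ) : ℂ)) /
    (((bb1 / b1 : ℝ) : ℂ) * (Complex.exp (Complex.I * (h * a : ℝ)) * Complex.exp z
        - (Real.cos (h * ω) : ℂ)) + ((sinc (h * ω) : ℝ) : ℂ))

/-- the scalar symbol L₂ of the operator L₂^k -/
def symbL2 (h ω a : ℝ) (c1 b1 bb1 : ℝ) (z : ℂ) : ℂ :=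
  ((Real.cos (c1 * h * ω) : ℝ) : ℂ) + ((c1 * sinc (c1 * h * ω) : ℝ) : ℂ) * symbL1 h ω a b1 bb1 z

/-- the scalar symbol L of the operator L^k -/
def symbL (h ω a : ℝ) (c1 b1 bb1 : ℝ) (z : ℂ) : ℂ :=
  (Complex.exp (Complex.I * (h * a : ℝ)) * Complex.exp z - (Real.cos (h * ω) : ℂ)
      - ((sinc (h * ω) : ℝ) : ℂ) * symbL1 h ω a b1 bb1 z) /
    ((bb1 : ℂ) * symbL2 h ω a c1 b1 bb1 z)

theorem sinc_of_ne_zero {x : ℝ} (hx : x ≠ 0) : sinc x = Real.sin x / x := if_neg hx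

theorem sin_eq_half_angle (x : ℝ) : Real.sin x = 2 * Real.sin (x / 2) * Real.cos (x / 2) := by
  rw [← Real.sin_two_mul, mul_div_cancel₀ x two_ne_zero]

theorem sinc_eq_half_angle {x : ℝ} (hx : x ≠ 0) :
    sinc x = 2 * Real.sin (x / 2) * Real.cos (x / 2) / x := by
  rw [sinc_of_ne_zero hx, sin_eq_half_angle]

theorem cos_eq_half_angle (x : ℝ) :
    Real.cos x = Real.cos (x / 2) ^ 2 - Real.sin (x / 2) ^ 2 := by
  rw [← Real.cos_two_mul', mul_div_cancel₀ x two_ne_zero]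

theorem cos_half_mul_mul_eq_of_symmetric {x b bb : ℝ} (hx : x ≠ 0)
    (hsym : Real.cos (1 / 2 * x) * bb = 1 / 2 * sinc (1 / 2 * x) * b) :
    Real.cos (x / 2) * bb * x = Real.sin (x / 2) * b := by
  rw [sinc_of_ne_zero (by positivity), show 1 / 2 * x = x / 2 by ring] at hsym
  field_simp at hsym
  linarith

theorem cos_add_mul_sin_mul_div_eq_one_of_symmetric {x b bb : ℝ} (hb : b ≠ 0)
    (hsym : Real.cos (x / 2) * bb * x = Real.sin (x / 2) * b) :
    Real.cos x + x * Real.sin x * (bb / b) = 1 := by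
  rw [sin_eq_half_angle, cos_eq_half_angle]
  field_simp
  linear_combination 2 * Real.sin (x / 2) * hsym + b * Real.cos_sq_add_sin_sq (x / 2)

section SymmetricSymbols

open Complex Filter Topology

theorem deriv_cosh_add_sub_div (θ C D : ℂ) :
    deriv (fun z => (cosh (θ + z) - C) / D) = fun z => sinh (θ + z) / D := by
  funext z
  exact ((((hasDerivAt_id z).const_add θ).ccosh.sub_const C).div_const D).deriv.trans (by simp)

theorem deriv_sinh_add_div (θ D : ℂ) :
    deriv (fun z => sinh (θ + z) / D) = fun z => cosh (θ + z) / D := by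
  funext z
  exact (((hasDerivAt_id z).const_add θ).csinh.div_const D).deriv.trans (by simp)

variable {h ω a b1 bb1 : ℝ}

theorem symbL1_denom_eq_of_symmetric (hx : h * ω ≠ 0) (hb1 : b1 ≠ 0)
    (hcos : Real.cos (h * ω / 2) ≠ 0)
    (hsym : Real.cos (h * ω / 2) * bb1 * (h * ω) = Real.sin (h * ω / 2) * b1) (w : ℂ) :
    ((bb1 / b1 : ℝ) : ℂ) * (w - (Real.cos (h * ω) : ℂ)) + ((sinc (h * ω) : ℝ) : ℂ) =
      Real.sin (h * ω / 2) * (w + 1) / ((h * ω : ℝ) * Real.cos (h * ω / 2)) := by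
  rw [sinc_eq_half_angle hx, cos_eq_half_angle]
  have hpy := Real.sin_sq_add_cos_sq (h * ω / 2)
  generalize h * ω = x, Real.sin (h * ω / 2) = s, Real.cos (h * ω / 2) = c at *
  have hsym' : (c * bb1 * x : ℂ) = s * b1 := by exact_mod_cast hsym
  have hpy' : (s ^ 2 + c ^ 2 : ℂ) = 1 := by exact_mod_cast hpy
  have : (b1 : ℂ) ≠ 0 := ofReal_ne_zero.2 hb1
  have : (c : ℂ) ≠ 0 := ofReal_ne_zero.2 hcos
  have : (x : ℂ) ≠ 0 := ofReal_ne_zero.2 hx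
  push_cast
  field_simp
  linear_combination (w - (c ^ 2 - s ^ 2 : ℂ)) * hsym' + (s * b1 : ℂ) * hpy'

theorem symbL1_eq_of_symmetric (hx : h * ω ≠ 0) (hb1 : b1 ≠ 0)
    (hcos : Real.cos (h * ω / 2) ≠ 0)
    (hsym : Real.cos (h * ω / 2) * bb1 * (h * ω) = Real.sin (h * ω / 2) * b1) (z : ℂ) :
    symbL1 h ω a b1 bb1 z =
      (h * ω : ℝ) * Real.cos (h * ω / 2) * (exp (I * (h * a : ℝ)) * exp z - 1) /
        (Real.sin (h * ω / 2) * (exp (I * (h * a : ℝ)) * exp z + 1)) := by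
  have hnum : (Real.cos (h * ω) : ℂ) + (h * ω * Real.sin (h * ω) * (bb1 / b1) : ℝ) = 1 := by
    exact_mod_cast cos_add_mul_sin_mul_div_eq_one_of_symmetric hb1 hsym
  rw [symbL1, symbL1_denom_eq_of_symmetric hx hb1 hcos hsym, div_div_eq_mul_div]
  congr 1
  linear_combination (-(h * ω : ℝ) * Real.cos (h * ω / 2) : ℂ) * hnum

theorem symbL2_eq_of_symmetric (hx : h * ω ≠ 0) (hb1 : b1 ≠ 0)
    (hs : Real.sin (h * ω / 2) ≠ 0) (hcos : Real.cos (h * ω / 2) ≠ 0)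
    (hsym : Real.cos (h * ω / 2) * bb1 * (h * ω) = Real.sin (h * ω / 2) * b1) {z : ℂ}
    (hz : exp (I * (h * a : ℝ)) * exp z + 1 ≠ 0) :
    symbL2 h ω a (1 / 2) b1 bb1 z =
      2 * Real.cos (h * ω / 2) * (exp (I * (h * a : ℝ)) * exp z) /
        (exp (I * (h * a : ℝ)) * exp z + 1) := by
  rw [symbL2, symbL1_eq_of_symmetric hx hb1 hcos hsym, show 1 / 2 * h * ω = h * ω / 2 by ring,
    sinc_of_ne_zero (by positivity)]
  generalize exp (I * (h * a : ℝ)) * exp z = E at *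
  generalize h * ω = x, Real.sin (h * ω / 2) = s, Real.cos (h * ω / 2) = c at *
  have : (s : ℂ) ≠ 0 := ofReal_ne_zero.2 hs
  have : (x : ℂ) ≠ 0 := ofReal_ne_zero.2 hx
  push_cast
  field_simp
  ring

theorem symbL_eq_of_symmetric (hx : h * ω ≠ 0) (hb1 : b1 ≠ 0)
    (hs : Real.sin (h * ω / 2) ≠ 0) (hcos : Real.cos (h * ω / 2) ≠ 0)
    (hsym : Real.cos (h * ω / 2) * bb1 * (h * ω) = Real.sin (h * ω / 2) * b1) {z : ℂ}
    (hz : exp (I * (h * a : ℝ)) * exp z + 1 ≠ 0) :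
    symbL h ω a (1 / 2) b1 bb1 z =
      (cosh (I * (h * a : ℝ) + z) - Real.cos (h * ω)) / (bb1 * Real.cos (h * ω / 2)) := by
  rw [symbL, symbL2_eq_of_symmetric hx hb1 hs hcos hsym hz,
    symbL1_eq_of_symmetric hx hb1 hcos hsym, cosh, exp_neg, exp_add, sinc_eq_half_angle hx,
    cos_eq_half_angle]
  have hE0 : exp (I * (h * a : ℝ)) * exp z ≠ 0 := mul_ne_zero (exp_ne_zero _) (exp_ne_zero _)
  have hpy := Real.sin_sq_add_cos_sq (h * ω / 2)
  generalize exp (I * (h * a : ℝ)) * exp z = E at *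
  generalize h * ω = x, Real.sin (h * ω / 2) = s, Real.cos (h * ω / 2) = c at *
  have hpy' : (s ^ 2 + c ^ 2 : ℂ) = 1 := by exact_mod_cast hpy
  have : (s : ℂ) ≠ 0 := ofReal_ne_zero.2 hs
  have : (c : ℂ) ≠ 0 := ofReal_ne_zero.2 hcos
  have : (x : ℂ) ≠ 0 := ofReal_ne_zero.2 hx
  push_cast
  field_simp
  linear_combination (1 - E) / (bb1 : ℂ) * hpy'

theorem symbL_eventuallyEq_of_symmetric (hx : h * ω ≠ 0) (hb1 : b1 ≠ 0)
    (hs : Real.sin (h * ω / 2) ≠ 0) (hcos : Real.cos (h * ω / 2) ≠ 0)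
    (hsym : Real.cos (h * ω / 2) * bb1 * (h * ω) = Real.sin (h * ω / 2) * b1)
    (hE : exp (I * (h * a : ℝ)) + 1 ≠ 0) :
    symbL h ω a (1 / 2) b1 bb1 =ᶠ[𝓝 0]
      fun z => (cosh (I * (h * a : ℝ) + z) - Real.cos (h * ω)) / (bb1 * Real.cos (h * ω / 2)) := by
  have hcont : ContinuousAt (fun z => exp (I * (h * a : ℝ)) * exp z + 1) 0 := by fun_prop
  filter_upwards [hcont.eventually_ne (by simpa using hE)] with z hz
  exact symbL_eq_of_symmetric hx hb1 hs hcos hsym hz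

theorem symbL_taylor_of_symmetric (hx : h * ω ≠ 0) (hb1 : b1 ≠ 0)
    (hs : Real.sin (h * ω / 2) ≠ 0) (hcos : Real.cos (h * ω / 2) ≠ 0)
    (hsym : Real.cos (h * ω / 2) * bb1 * (h * ω) = Real.sin (h * ω / 2) * b1)
    (hE : exp (I * (h * a : ℝ)) + 1 ≠ 0) :
    symbL h ω a (1 / 2) b1 bb1 0 =
        ((Real.cos (h * a) - Real.cos (h * ω)) / (bb1 * Real.cos (h * ω / 2)) : ℝ) ∧
      deriv (symbL h ω a (1 / 2) b1 bb1) 0 =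
        I * (Real.sin (h * a) / (bb1 * Real.cos (h * ω / 2)) : ℝ) ∧
      iteratedDeriv 2 (symbL h ω a (1 / 2) b1 bb1) 0 =
        (Real.cos (h * a) / (bb1 * Real.cos (h * ω / 2)) : ℝ) := by
  have hL := symbL_eventuallyEq_of_symmetric hx hb1 hs hcos hsym hE
  have hcosh : cosh (I * (h * a : ℝ)) = Real.cos (h * a) := by
    rw [mul_comm, cosh_mul_I, ofReal_cos]
  have hsinh : sinh (I * (h * a : ℝ)) = Real.sin (h * a) * I := by
    rw [mul_comm, sinh_mul_I, ofReal_sin]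
  refine ⟨?_, ?_, ?_⟩
  · rw [hL.eq_of_nhds, add_zero, hcosh]
    push_cast
    rfl
  · rw [hL.deriv_eq, deriv_cosh_add_sub_div]
    dsimp only
    rw [add_zero, hsinh]
    push_cast
    ring
  · rw [hL.iteratedDeriv_eq, iteratedDeriv_succ, iteratedDeriv_one, deriv_cosh_add_sub_div,
      deriv_sinh_add_div]
    dsimp only
    rw [add_zero, hcosh]
    push_cast
    rfl

end SymmetricSymbols

theorem symbL_taylor_symmetric_general
    (h ω a : ℝ) (hh : 0 < h) (hω : 0 < ω) (hsin : Real.sin (h * ω) ≠ 0)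
    (c1 : ℝ) (b1f bb1f : ℝ → ℝ)
    -- symmetry conditions
    (hc1sym : c1 = 1 / 2)
    (hsym2 : ∀ x : ℝ, 0 ≤ x → Real.cos (c1 * x) * bb1f x = c1 * sinc (c1 * x) * b1f x)
    (hb1 : b1f (h * ω) ≠ 0)
    (hcos : Real.cos (h * ω / 2) ≠ 0)
    -- the denominators of L₁ and L at z = 0 do not vanish
    (hden1 : ((bb1f (h * ω) / b1f (h * ω) : ℝ) : ℂ) *
        (Complex.exp (Complex.I * (h * a : ℝ)) - (Real.cos (h * ω) : ℂ))
        + ((sinc (h * ω) : ℝ) : ℂ) ≠ 0) :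
    -- (i) for a = ±ω
    ((a = ω ∨ a = -ω) →
      symbL h ω a c1 (b1f (h * ω)) (bb1f (h * ω)) 0 = 0) ∧
    (a = ω →
      deriv (symbL h ω a c1 (b1f (h * ω)) (bb1f (h * ω))) 0 =
        2 * Complex.I * ((Real.sin (h * ω / 2) / bb1f (h * ω) : ℝ) : ℂ) ∧
      iteratedDeriv 2 (symbL h ω a c1 (b1f (h * ω)) (bb1f (h * ω))) 0 =
        ((Real.cos (h * ω) * (Real.cos (h * ω / 2))⁻¹ / bb1f (h * ω) : ℝ) : ℂ)) ∧
    (a = -ω →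
      deriv (symbL h ω a c1 (b1f (h * ω)) (bb1f (h * ω))) 0 =
        -(2 * Complex.I * ((Real.sin (h * ω / 2) / bb1f (h * ω) : ℝ) : ℂ)) ∧
      iteratedDeriv 2 (symbL h ω a c1 (b1f (h * ω)) (bb1f (h * ω))) 0 =
        ((Real.cos (h * ω) * (Real.cos (h * ω / 2))⁻¹ / bb1f (h * ω) : ℝ) : ℂ)) ∧
    -- (ii) for arbitrary real a
    (symbL h ω a c1 (b1f (h * ω)) (bb1f (h * ω)) 0 =
      ((2 * (Real.cos (h * ω / 2))⁻¹ *
        Real.sin (h / 2 * (ω + a)) * Real.sin (h / 2 * (ω - a)) / bb1f (h * ω) : ℝ) : ℂ)) ∧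
    (deriv (symbL h ω a c1 (b1f (h * ω)) (bb1f (h * ω))) 0 =
      Complex.I * (((Real.cos (h * ω / 2))⁻¹ * Real.sin (h * a) / bb1f (h * ω) : ℝ) : ℂ)) := by
  subst hc1sym
  have hx : h * ω ≠ 0 := fun hzero => hsin (by rw [hzero, Real.sin_zero])
  have hs : Real.sin (h * ω / 2) ≠ 0 := fun hzero => hsin (by
    rw [sin_eq_half_angle, hzero, mul_zero, zero_mul])
  have hsym := cos_half_mul_mul_eq_of_symmetric hx (hsym2 _ (mul_pos hh hω).le)
  have hE : Complex.exp (Complex.I * (h * a : ℝ)) + 1 ≠ 0 := fun hzero => hden1 (by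
    rw [symbL1_denom_eq_of_symmetric hx hb1 hcos hsym, hzero, mul_zero, zero_div])
  obtain ⟨hL0, hL1, hL2⟩ := symbL_taylor_of_symmetric hx hb1 hs hcos hsym hE
  have hsin_div : Real.sin (h * ω) / (bb1f (h * ω) * Real.cos (h * ω / 2)) =
      2 * (Real.sin (h * ω / 2) / bb1f (h * ω)) := by
    rw [sin_eq_half_angle]; field_simp
  have hcos_sub : Real.cos (h * a) - Real.cos (h * ω) =
      2 * Real.sin (h / 2 * (ω + a)) * Real.sin (h / 2 * (ω - a)) := by
    rw [Real.cos_sub_cos, show (h * a + h * ω) / 2 = h / 2 * (ω + a) by ring,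
      show (h * a - h * ω) / 2 = -(h / 2 * (ω - a)) by ring, Real.sin_neg]
    ring
  refine ⟨?_, ?_, ?_, ?_, ?_⟩
  · rintro (rfl | rfl) <;>
      simp only [hL0, mul_neg, Real.cos_neg, sub_self, zero_div, Complex.ofReal_zero]
  · rintro rfl
    rw [hL1, hsin_div, hL2]
    constructor <;> push_cast <;> ring
  · rintro rfl
    rw [hL1, mul_neg, Real.sin_neg, neg_div, hsin_div, hL2, mul_neg, Real.cos_neg]
    constructor <;> push_cast <;> ring
  · rw [hL0, hcos_sub]
    push_cast; ring
  · rw [hL1]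
    push_cast; ring

/-- Taylor expansion at z = 0 of the scalar symbol L of the operator
L^k for ERKN coefficients satisfying the symmetry conditions. -/
theorem symbL_taylor_symmetric
    (h ω a : ℝ) (hh : 0 < h) (hω : 0 < ω) (hsin : Real.sin (h * ω) ≠ 0)
    (c1 : ℝ) (hc1 : c1 ∈ Set.Icc (0 : ℝ) 1) (b1f bb1f : ℝ → ℝ)
    -- symmetry conditions
    (hc1sym : c1 = 1 / 2)
    (hsym1 : ∀ x : ℝ, 0 ≤ x → bb1f x = sinc x * b1f x - Real.cos x * bb1f x)
    (hsym2 : ∀ x : ℝ, 0 ≤ x → Real.cos (c1 * x) * bb1f x = c1 * sinc (c1 * x) * b1f x)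
    (hb1 : b1f (h * ω) ≠ 0) (hbb1 : bb1f (h * ω) ≠ 0)
    (hcos : Real.cos (h * ω / 2) ≠ 0)
    -- the denominators of L₁ and L at z = 0 do not vanish
    (hden1 : ((bb1f (h * ω) / b1f (h * ω) : ℝ) : ℂ) *
        (Complex.exp (Complex.I * (h * a : ℝ)) - (Real.cos (h * ω) : ℂ))
        + ((sinc (h * ω) : ℝ) : ℂ) ≠ 0)
    (hden2 : ((bb1f (h * ω) : ℝ) : ℂ) *
        symbL2 h ω a c1 (b1f (h * ω)) (bb1f (h * ω)) 0 ≠ 0) :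
    -- (i) for a = ±ω
    ((a = ω ∨ a = -ω) →
      symbL h ω a c1 (b1f (h * ω)) (bb1f (h * ω)) 0 = 0) ∧
    (a = ω →
      deriv (symbL h ω a c1 (b1f (h * ω)) (bb1f (h * ω))) 0 =
        2 * Complex.I * ((Real.sin (h * ω / 2) / bb1f (h * ω) : ℝ) : ℂ) ∧
      iteratedDeriv 2 (symbL h ω a c1 (b1f (h * ω)) (bb1f (h * ω))) 0 =
        ((Real.cos (h * ω) * (Real.cos (h * ω / 2))⁻¹ / bb1f (h * ω) : ℝ) : ℂ)) ∧
    (a = -ω →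
      deriv (symbL h ω a c1 (b1f (h * ω)) (bb1f (h * ω))) 0 =
        -(2 * Complex.I * ((Real.sin (h * ω / 2) / bb1f (h * ω) : ℝ) : ℂ)) ∧
      iteratedDeriv 2 (symbL h ω a c1 (b1f (h * ω)) (bb1f (h * ω))) 0 =
        ((Real.cos (h * ω) * (Real.cos (h * ω / 2))⁻¹ / bb1f (h * ω) : ℝ) : ℂ)) ∧
    -- (ii) for arbitrary real a
    (symbL h ω a c1 (b1f (h * ω)) (bb1f (h * ω)) 0 =
      ((2 * (Real.cos (h * ω / 2))⁻¹ *
        Real.sin (h / 2 * (ω + a)) * Real.sin (h / 2 * (ω - a)) / bb1f (h * ω) : ℝ) : ℂ)) ∧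
    (deriv (symbL h ω a c1 (b1f (h * ω)) (bb1f (h * ω))) 0 =
      Complex.I * (((Real.cos (h * ω / 2))⁻¹ * Real.sin (h * a) / bb1f (h * ω) : ℝ) : ℂ)) :=
  symbL_taylor_symmetric_general h ω a hh hω hsin c1 b1f bb1f hc1sym hsym2 hb1 hcos hden1
end
end

section
/- Claim (equivalence of one-stage ERKN methods with the Strang splitting): Let Φₕ be a one-stage explicit ERKN method with c₁ = 1/2 and coefficient functions b₁, b̄₁. Then Φₕ = Φ_{h/2,L} ∘ Φ_{h,NL} ∘ Φ_{h/2,L} (as maps, for every stepsize h > 0, every diagonal Ω with nonnegative entries, and every smooth g̃) if and only if the coefficients satisfy (1/2)·sinc(hΩ/2)·Υ(hΩ) = b̄₁(hΩ) and cos(hΩ/2)·Υ(hΩ) = b₁(hΩ) (entrywise identities for all h > 0 and all Ω). -/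
noncomputable section

/-- the linear splitting map Φ_{a,L} -/
def phiL (d : ℕ) (a : ℝ) (Ω : Fin d → ℝ) (qp : (Fin d → ℝ) × (Fin d → ℝ)) :
    (Fin d → ℝ) × (Fin d → ℝ) :=
  (fun j => Real.cos (a * Ω j) * qp.1 j + a * sinc (a * Ω j) * qp.2 j,
   fun j => -(Ω j * Real.sin (a * Ω j)) * qp.1 j + Real.cos (a * Ω j) * qp.2 j)

/-- the nonlinear splitting map Φ_{a,NL} with step length `a`; the filter matrix
is Υ(bΩ), where `b` is the stepsize of the overall method in which this
(half-)step is used. -/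
def phiNL (d : ℕ) (a b : ℝ) (Ω : Fin d → ℝ) (Υ : ℝ → ℝ)
    (gt : (Fin d → ℝ) → (Fin d → ℝ)) (qp : (Fin d → ℝ) × (Fin d → ℝ)) :
    (Fin d → ℝ) × (Fin d → ℝ) :=
  (qp.1, fun j => qp.2 j + a * Υ (b * Ω j) * gt qp.1 j)

/-- the Strang splitting Φ̂ₕ = Φ_{h/2,NL} ∘ Φ_{h,L} ∘ Φ_{h/2,NL} -/
def hatPhi (d : ℕ) (h : ℝ) (Ω : Fin d → ℝ) (Υ : ℝ → ℝ)
    (gt : (Fin d → ℝ) → (Fin d → ℝ)) (qp : (Fin d → ℝ) × (Fin d → ℝ)) :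
    (Fin d → ℝ) × (Fin d → ℝ) :=
  phiNL d (h / 2) h Ω Υ gt (phiL d h Ω (phiNL d (h / 2) h Ω Υ gt qp))

lemma sinc_half (x : ℝ) : sinc x = Real.cos (x / 2) * sinc (x / 2) := by
  unfold sinc
  rcases eq_or_ne x 0 with rfl | hx
  · simp
  · have h2 : x / 2 ≠ 0 := by simpa using hx
    rw [if_neg hx, if_neg h2]
    have : Real.sin x = 2 * Real.sin (x/2) * Real.cos (x/2) := by
      rw [show x = 2 * (x/2) by ring, Real.sin_two_mul]; ring_nf
    rw [this]; field_simp

lemma cos_half_sq (x : ℝ) : Real.cos x = Real.cos (x/2)^2 - Real.sin (x/2)^2 := by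
  rw [show x = 2 * (x/2) by ring, Real.cos_two_mul']
  ring_nf

lemma sin_half (x : ℝ) : Real.sin x = 2 * Real.sin (x/2) * Real.cos (x/2) := by
  rw [show x = 2 * (x/2) by ring, Real.sin_two_mul]; ring_nf


/-- a one-stage explicit ERKN method with c₁ = 1/2 coincides with the
Strang splitting Φ_{h/2,L} ∘ Φ_{h,NL} ∘ Φ_{h/2,L} (for every stepsize, every
diagonal Ω ≥ 0 and every smooth g̃) if and only if
(1/2)·sinc(hΩ/2)·Υ(hΩ) = b̄₁(hΩ) and cos(hΩ/2)·Υ(hΩ) = b₁(hΩ) entrywise. -/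
theorem erkn_eq_strang_splitting_iff (b1 bb1 Υ : ℝ → ℝ) :
    (∀ (d : ℕ) (h : ℝ), 0 < h → ∀ Ω : Fin d → ℝ, (∀ j, 0 ≤ Ω j) →
      ∀ gt : (Fin d → ℝ) → (Fin d → ℝ), ContDiff ℝ (⊤ : ℕ∞) gt →
      ∀ qp : (Fin d → ℝ) × (Fin d → ℝ),
        erknStep d (1 / 2) b1 bb1 h Ω gt qp =
          phiL d (h / 2) Ω (phiNL d h h Ω Υ gt (phiL d (h / 2) Ω qp))) ↔
    (∀ x : ℝ, 0 ≤ x →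
      1 / 2 * sinc (x / 2) * Υ x = bb1 x ∧ Real.cos (x / 2) * Υ x = b1 x) := by
  constructor
  · intro hmap x hx
    have hpos : (0:ℝ) < max x 1 := lt_max_of_lt_right one_pos
    set h : ℝ := max x 1 with hh
    have hne : h ≠ 0 := ne_of_gt hpos
    have hx1 : h * (x / h) = x := by field_simp
    have hx2 : h / 2 * (x / h) = x / 2 := by field_simp
    have key := hmap 1 h hpos (fun _ => x / h) (fun j => by positivity)
      (fun _ _ => 1) contDiff_const (0, 0)
    have h1 := congrFun (congrArg Prod.fst key) 0
    have h2 := congrFun (congrArg Prod.snd key) 0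
    simp only [erknStep, phiL, phiNL, hx1, hx2, Prod.fst, Prod.snd, Pi.zero_apply,
      mul_zero, zero_add, add_zero, mul_one, neg_zero, zero_mul] at h1 h2
    constructor
    · have e1 : h ^ 2 * (1 / 2 * sinc (x / 2) * Υ x) = h ^ 2 * bb1 x := by
        linear_combination -h1
      exact mul_left_cancel₀ (pow_ne_zero 2 hne) e1
    · have e2 : h * (Real.cos (x / 2) * Υ x) = h * b1 x := by
        linear_combination -h2
      exact mul_left_cancel₀ hne e2
  · intro hc d h hpos Ω hΩ gt hgt qp
    simp only [erknStep, phiL, phiNL]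
    have hQ : (fun j => Real.cos (1 / 2 * h * Ω j) * qp.1 j
          + h * (1 / 2) * sinc (1 / 2 * h * Ω j) * qp.2 j)
        = fun j => Real.cos (h / 2 * Ω j) * qp.1 j
          + h / 2 * sinc (h / 2 * Ω j) * qp.2 j := by
      funext j
      rw [show (1:ℝ) / 2 * h * Ω j = h / 2 * Ω j by ring]
      ring
    rw [hQ]
    refine Prod.ext (funext fun j => ?_) (funext fun j => ?_) <;>
    · obtain ⟨e1, e2⟩ := hc (h * Ω j) (mul_nonneg hpos.le (hΩ j))
      have a2 : h / 2 * Ω j = h * Ω j / 2 := by ring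
      simp only []
      set G := gt (fun j => Real.cos (h / 2 * Ω j) * qp.1 j
        + h / 2 * sinc (h / 2 * Ω j) * qp.2 j) j with hG
      rw [a2]
      have c2 := cos_half_sq (h * Ω j)
      have s2 := sin_half (h * Ω j)
      have m1 := mul_sinc (h * Ω j)
      have m2 := mul_sinc (h * Ω j / 2)
      have sh := sinc_half (h * Ω j)
      first
      | linear_combination qp.1 j * c2 + qp.1 j * Real.sin (h * Ω j / 2) * m2
          + h * qp.2 j * sh - h ^ 2 * G * e1
      | linear_combination (-(qp.1 j) * Ω j) * m1 + (-(qp.1 j) * Ω j) * s2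
          + qp.2 j * c2 + qp.2 j * Real.sin (h * Ω j / 2) * m2 - h * G * e2
end
end

section
/- Proposition (conjugacy of symmetric ERKN methods to trigonometric integrators): Let Φₕ be a one-stage explicit ERKN method whose coefficients satisfy the symmetry conditions, assume cos(hω_j/2) ≠ 0 for every diagonal entry ω_j of Ω, and define Υ entrywise by Υ(hω_j) = b₁(hω_j)/cos(hω_j/2) (then also (1/2)sinc(hω_j/2)Υ(hω_j) = b̄₁(hω_j)). Let Φ̂ₕ = Φ_{h/2,NL} ∘ Φ_{h,L} ∘ Φ_{h/2,NL}. Then, for every smooth g̃: Φₕ = Φ_{−h/2,L} ∘ Φ_{−h/2,NL} ∘ Φ̂ₕ ∘ Φ_{h/2,NL} ∘ Φ_{h/2,L}, and for every integer n ≥ 1 the n-fold compositions satisfy Φₕⁿ = Φ_{−h/2,L} ∘ Φ_{−h/2,NL} ∘ Φ̂ₕⁿ ∘ Φ_{h/2,NL} ∘ Φ_{h/2,L} = Φ_{h/2,L} ∘ Φ_{h/2,NL} ∘ Φ̂ₕⁿ⁻¹ ∘ Φ_{h/2,NL} ∘ Φ_{h/2,L}. -/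
noncomputable section

lemma mul_sinc_self (y : ℝ) : y * sinc y = Real.sin y := by
  unfold sinc
  split
  · simp [*]
  · field_simp

lemma phiL_comp (d : ℕ) (a b : ℝ) (Ω : Fin d → ℝ) (qp : (Fin d → ℝ) × (Fin d → ℝ)) :
    phiL d a Ω (phiL d b Ω qp) = phiL d (a + b) Ω qp := by
  unfold phiL
  refine Prod.ext ?_ ?_ <;> funext j <;> simp only <;>
  · by_cases hx : Ω j = 0
    · simp [hx, sinc]
      try ring
    · have e : ∀ t : ℝ, t * sinc (t * Ω j) = Real.sin (t * Ω j) / Ω j := by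
        intro t
        rw [eq_div_iff hx]
        linear_combination mul_sinc_self (t * Ω j)
      simp only [e]
      rw [show (a + b) * Ω j = a * Ω j + b * Ω j from by ring,
        Real.cos_add, Real.sin_add]
      field_simp
      ring

lemma phiL_zero (d : ℕ) (Ω : Fin d → ℝ) (qp : (Fin d → ℝ) × (Fin d → ℝ)) :
    phiL d 0 Ω qp = qp := by
  simp [phiL]

lemma phiNL_comp (d : ℕ) (a a' b : ℝ) (Ω : Fin d → ℝ) (Υ : ℝ → ℝ)
    (gt : (Fin d → ℝ) → (Fin d → ℝ)) (qp : (Fin d → ℝ) × (Fin d → ℝ)) :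
    phiNL d a b Ω Υ gt (phiNL d a' b Ω Υ gt qp) = phiNL d (a + a') b Ω Υ gt qp := by
  unfold phiNL
  refine Prod.ext rfl ?_
  funext j
  simp only
  ring

lemma phiNL_zero (d : ℕ) (b : ℝ) (Ω : Fin d → ℝ) (Υ : ℝ → ℝ)
    (gt : (Fin d → ℝ) → (Fin d → ℝ)) (qp : (Fin d → ℝ) × (Fin d → ℝ)) :
    phiNL d 0 b Ω Υ gt qp = qp := by
  simp [phiNL]

/-- a one-stage explicit symmetric ERKN method is conjugate, via the
half-step maps Φ_{h/2,L} and Φ_{h/2,NL}, to the trigonometric integrator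
Φ̂ₕ = Φ_{h/2,NL} ∘ Φ_{h,L} ∘ Φ_{h/2,NL}, with corresponding identities for the
n-fold compositions. -/
theorem symmetric_erkn_conjugate_to_trigonometric
    (c1 : ℝ) (b1 bb1 Υ : ℝ → ℝ)
    -- symmetry conditions
    (hc1sym : c1 = 1 / 2)
    (hsym1 : ∀ x : ℝ, 0 ≤ x → bb1 x = sinc x * b1 x - Real.cos x * bb1 x)
    (hsym2 : ∀ x : ℝ, 0 ≤ x → Real.cos (c1 * x) * bb1 x = c1 * sinc (c1 * x) * b1 x)
    (d : ℕ) (h : ℝ) (hh : 0 < h) (Ω : Fin d → ℝ) (hΩ : ∀ j, 0 ≤ Ω j)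
    (hcos : ∀ j, Real.cos (h * Ω j / 2) ≠ 0)
    (hΥ : ∀ j, Υ (h * Ω j) = b1 (h * Ω j) / Real.cos (h * Ω j / 2))
    (gt : (Fin d → ℝ) → (Fin d → ℝ)) (hgt : ContDiff ℝ (⊤ : ℕ∞) gt) :
    (∀ qp : (Fin d → ℝ) × (Fin d → ℝ),
      erknStep d c1 b1 bb1 h Ω gt qp =
        phiL d (-(h / 2)) Ω (phiNL d (-(h / 2)) h Ω Υ gt
          (hatPhi d h Ω Υ gt (phiNL d (h / 2) h Ω Υ gt (phiL d (h / 2) Ω qp))))) ∧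
    (∀ n : ℕ, 1 ≤ n → ∀ qp : (Fin d → ℝ) × (Fin d → ℝ),
      (erknStep d c1 b1 bb1 h Ω gt)^[n] qp =
        phiL d (-(h / 2)) Ω (phiNL d (-(h / 2)) h Ω Υ gt
          ((hatPhi d h Ω Υ gt)^[n] (phiNL d (h / 2) h Ω Υ gt (phiL d (h / 2) Ω qp)))) ∧
      (erknStep d c1 b1 bb1 h Ω gt)^[n] qp =
        phiL d (h / 2) Ω (phiNL d (h / 2) h Ω Υ gt
          ((hatPhi d h Ω Υ gt)^[n - 1]
            (phiNL d (h / 2) h Ω Υ gt (phiL d (h / 2) Ω qp))))) := by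
  subst hc1sym
  -- coefficient identities
  have hb : ∀ j, Real.cos (h * Ω j / 2) * Υ (h * Ω j) = b1 (h * Ω j) := by
    intro j
    rw [hΥ j]
    field_simp
    exact mul_div_cancel_left₀ _ (hcos j)
  have hbb : ∀ j, bb1 (h * Ω j) = (1 / 2) * sinc (h * Ω j / 2) * Υ (h * Ω j) := by
    intro j
    have hx : (0:ℝ) ≤ h * Ω j := mul_nonneg hh.le (hΩ j)
    have h2 := hsym2 _ hx
    rw [show (1 : ℝ) / 2 * (h * Ω j) = h * Ω j / 2 from by ring] at h2
    have e : bb1 (h * Ω j)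
        = 1 / 2 * sinc (h * Ω j / 2) * b1 (h * Ω j) / Real.cos (h * Ω j / 2) := by
      rw [eq_div_iff (hcos j)]
      linear_combination h2
    rw [hΥ j, e]
    ring
  -- the key single-step identity
  have key : ∀ qp : (Fin d → ℝ) × (Fin d → ℝ),
      erknStep d (1/2) b1 bb1 h Ω gt qp =
        phiL d (h / 2) Ω (phiNL d h h Ω Υ gt (phiL d (h / 2) Ω qp)) := by
    intro qp
    have hXX : phiL d (h / 2) Ω (phiL d (h / 2) Ω qp) = phiL d h Ω qp := by
      rw [phiL_comp, show h / 2 + h / 2 = h from by ring]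
    have hQX : (fun j => Real.cos (1/2 * h * Ω j) * qp.1 j
        + h * (1/2) * sinc (1/2 * h * Ω j) * qp.2 j) = (phiL d (h / 2) Ω qp).1 := by
      funext j
      simp only [phiL]
      rw [show (1:ℝ)/2 * h * Ω j = h / 2 * Ω j from by ring]
      ring
    unfold erknStep
    simp only [hQX]
    refine Prod.ext ?_ ?_ <;> funext j
    · have e1 : (phiL d (h / 2) Ω (phiNL d h h Ω Υ gt (phiL d (h / 2) Ω qp))).1 j
          = (phiL d h Ω qp).1 j
            + h / 2 * sinc (h / 2 * Ω j) * (h * Υ (h * Ω j))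
              * gt (phiL d (h / 2) Ω qp).1 j := by
        rw [← hXX]
        simp only [phiL, phiNL]
        ring
      rw [e1]
      simp only [phiL]
      rw [hbb j, show h * Ω j / 2 = h / 2 * Ω j from by ring]
      ring
    · have e2 : (phiL d (h / 2) Ω (phiNL d h h Ω Υ gt (phiL d (h / 2) Ω qp))).2 j
          = (phiL d h Ω qp).2 j
            + Real.cos (h / 2 * Ω j) * (h * Υ (h * Ω j))
              * gt (phiL d (h / 2) Ω qp).1 j := by
        rw [← hXX]
        simp only [phiL, phiNL]
        ring
      rw [e2]
      simp only [phiL]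
      have hb' := hb j
      rw [show h * Ω j / 2 = h / 2 * Ω j from by ring] at hb'
      have hss : Ω j ^ 2 * sinc (h * Ω j) * h = Ω j * Real.sin (h * Ω j) := by
        linear_combination Ω j * mul_sinc_self (h * Ω j)
      rw [← hb']
      linear_combination (-(qp.1 j)) * hss
  -- abbreviations for inverses
  have hA : ∀ x, phiL d (h / 2) Ω (phiL d (-(h / 2)) Ω x) = x := by
    intro x
    rw [phiL_comp, show h / 2 + -(h / 2) = (0:ℝ) from by ring, phiL_zero]
  have hA' : ∀ x, phiL d (-(h / 2)) Ω (phiL d (h / 2) Ω x) = x := by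
    intro x
    rw [phiL_comp, show -(h / 2) + h / 2 = (0:ℝ) from by ring, phiL_zero]
  have hB : ∀ x, phiNL d (h / 2) h Ω Υ gt (phiNL d (-(h / 2)) h Ω Υ gt x) = x := by
    intro x
    rw [phiNL_comp, show h / 2 + -(h / 2) = (0:ℝ) from by ring, phiNL_zero]
  have hB' : ∀ x, phiNL d (-(h / 2)) h Ω Υ gt (phiNL d (h / 2) h Ω Υ gt x) = x := by
    intro x
    rw [phiNL_comp, show -(h / 2) + h / 2 = (0:ℝ) from by ring, phiNL_zero]
  have hB2 : ∀ x, phiNL d (h / 2) h Ω Υ gt (phiNL d (h / 2) h Ω Υ gt x)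
      = phiNL d h h Ω Υ gt x := by
    intro x
    rw [phiNL_comp, show h / 2 + h / 2 = h from by ring]
  have hAh : ∀ x, phiL d (-(h / 2)) Ω (phiL d h Ω x) = phiL d (h / 2) Ω x := by
    intro x
    rw [phiL_comp, show -(h / 2) + h = h / 2 from by ring]
  have hatPhi_eq : ∀ x, hatPhi d h Ω Υ gt x
      = phiNL d (h / 2) h Ω Υ gt (phiL d h Ω (phiNL d (h / 2) h Ω Υ gt x)) :=
    fun _ => rfl
  have stmt1 : ∀ qp : (Fin d → ℝ) × (Fin d → ℝ),
      erknStep d (1/2) b1 bb1 h Ω gt qp =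
        phiL d (-(h / 2)) Ω (phiNL d (-(h / 2)) h Ω Υ gt
          (hatPhi d h Ω Υ gt (phiNL d (h / 2) h Ω Υ gt (phiL d (h / 2) Ω qp)))) := by
    intro qp
    rw [hatPhi_eq, hB', hB2, hAh, key]
  have iter1 : ∀ (n : ℕ) (qp : (Fin d → ℝ) × (Fin d → ℝ)),
      (erknStep d (1/2) b1 bb1 h Ω gt)^[n] qp =
        phiL d (-(h / 2)) Ω (phiNL d (-(h / 2)) h Ω Υ gt
          ((hatPhi d h Ω Υ gt)^[n] (phiNL d (h / 2) h Ω Υ gt (phiL d (h / 2) Ω qp)))) := by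
    intro n
    induction n with
    | zero =>
      intro qp
      simp only [Function.iterate_zero, id_eq]
      rw [hB', hA']
    | succ n ih =>
      intro qp
      rw [Function.iterate_succ_apply', stmt1, ih, hA, hB, Function.iterate_succ_apply']
  refine ⟨stmt1, ?_⟩
  intro n hn qp
  refine ⟨iter1 n qp, ?_⟩
  obtain ⟨m, rfl⟩ : ∃ m, n = m + 1 := ⟨n - 1, (Nat.succ_pred_eq_of_pos hn).symm⟩
  rw [iter1, Function.iterate_succ_apply', hatPhi_eq, hB', hAh, Nat.add_sub_cancel]
end
end

section
/- Claim (classification of the method ERKN3): The ERKN coefficients c₁ = 1/2, b̄₁(hΩ) = (1/2)sinc²(hΩ/2), b₁(hΩ) = sinc(hΩ/2)cos(hΩ/2) satisfy all three symmetry conditions; explicitly, for all x = hω ≥ 0: sinc(x)·sinc(x/2)cos(x/2) − cos(x)·(1/2)sinc²(x/2) = (1/2)sinc²(x/2) and cos(x/2)·(1/2)sinc²(x/2) = (1/2)sinc(x/2)·sinc(x/2)cos(x/2). They do not satisfy the symplecticity conditions: there is no constant d₁ ∈ ℝ for which both symplecticity identities hold for all x ≥ 0, since the second identity would force d₁ =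 sinc(x/2) for all x (which equals 1 at x = 0 and 2/π at x = π). -/
/-!
Both symmetry identities reduce, via `sinc x = sinc (x/2) cos (x/2)` and
`cos x = 2 cos² (x/2) - 1`, to polynomial identities in `sinc (x/2)` and `cos (x/2)`.
The first of them says that the left-hand side of the second symplecticity identity is
`(1/2) sinc² (x/2)`, so that identity forces `d₁ = sinc (x/2)` wherever `sinc (x/2) ≠ 0`;
evaluating at `x = 0` and `x = π` gives `d₁ = 1 = 2/π`, which is absurd.
-/

noncomputable section

lemma sinc_eq_real_sinc : sinc = Real.sinc := rfl

lemma Real.sinc_pi_div_two : Real.sinc (Real.pi / 2) = 2 / Real.pi := by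
  simp [Real.sinc_of_ne_zero, Real.pi_ne_zero, Real.sin_pi_div_two]

lemma Real.sinc_two_mul (x : ℝ) : Real.sinc (2 * x) = Real.sinc x * Real.cos x := by
  rcases eq_or_ne x 0 with rfl | hx
  · simp [Real.sinc_zero]
  · rw [Real.sinc_of_ne_zero hx, Real.sinc_of_ne_zero (mul_ne_zero two_ne_zero hx),
      Real.sin_two_mul]
    field_simp

lemma Real.sinc_eq_sinc_half_mul_cos_half (x : ℝ) :
    Real.sinc x = Real.sinc (x / 2) * Real.cos (x / 2) := by
  rw [← Real.sinc_two_mul, mul_div_cancel₀ x two_ne_zero]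

lemma erkn3_symmetry_identity (x : ℝ) :
    sinc x * (sinc (x / 2) * Real.cos (x / 2)) - Real.cos x * (1 / 2 * sinc (x / 2) ^ 2) =
      1 / 2 * sinc (x / 2) ^ 2 := by
  have hcos : Real.cos x = 2 * Real.cos (x / 2) ^ 2 - 1 := by
    rw [← Real.cos_two_mul, mul_div_cancel₀ x two_ne_zero]
  rw [sinc_eq_real_sinc, Real.sinc_eq_sinc_half_mul_cos_half x, hcos]
  ring

lemma eq_sinc_half_of_erkn3_symplectic {d x : ℝ}
    (h : sinc x * (sinc (x / 2) * Real.cos (x / 2)) -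
        Real.cos x * (1 / 2 * sinc (x / 2) ^ 2) = 1 / 2 * d * sinc (1 / 2 * x))
    (hx : sinc (x / 2) ≠ 0) : d = sinc (x / 2) := by
  rw [erkn3_symmetry_identity, one_div_mul_eq_div 2 x] at h
  have : sinc (x / 2) * sinc (x / 2) = d * sinc (x / 2) := by linear_combination 2 * h
  exact (mul_right_cancel₀ hx this).symm

/-- the method ERKN3, with c₁ = 1/2, b̄₁(x) = (1/2)sinc²(x/2) and
b₁(x) = sinc(x/2)cos(x/2), is symmetric but not symplectic. -/
theorem erkn3_symmetric_not_symplectic :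
    let c1 : ℝ := 1 / 2
    let bb1 : ℝ → ℝ := fun x => 1 / 2 * sinc (x / 2) ^ 2
    let b1 : ℝ → ℝ := fun x => sinc (x / 2) * Real.cos (x / 2)
    -- the symmetry conditions hold, explicitly:
    (∀ x : ℝ, 0 ≤ x →
      sinc x * (sinc (x / 2) * Real.cos (x / 2)) - Real.cos x * (1 / 2 * sinc (x / 2) ^ 2) =
        1 / 2 * sinc (x / 2) ^ 2) ∧
    (∀ x : ℝ, 0 ≤ x →
      Real.cos (x / 2) * (1 / 2 * sinc (x / 2) ^ 2) =
        1 / 2 * sinc (x / 2) * (sinc (x / 2) * Real.cos (x / 2))) ∧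
    (c1 = 1 / 2 ∧
      (∀ x : ℝ, 0 ≤ x → bb1 x = sinc x * b1 x - Real.cos x * bb1 x) ∧
      (∀ x : ℝ, 0 ≤ x → Real.cos (c1 * x) * bb1 x = c1 * sinc (c1 * x) * b1 x)) ∧
    -- there is no d₁ for which both symplecticity identities hold for all x ≥ 0
    (¬ ∃ d1 : ℝ,
        (∀ x : ℝ, 0 ≤ x →
          Real.cos x * b1 x + x ^ 2 * sinc x * bb1 x = d1 * Real.cos (c1 * x)) ∧
        (∀ x : ℝ, 0 ≤ x →
          sinc x * b1 x - Real.cos x * bb1 x = c1 * d1 * sinc (c1 * x))) ∧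
    -- indeed the second symplecticity identity would force d₁ = sinc(x/2) for all x,
    -- which equals 1 at x = 0 and 2/π at x = π
    (∀ d1 : ℝ,
      (∀ x : ℝ, 0 ≤ x →
        sinc x * b1 x - Real.cos x * bb1 x = c1 * d1 * sinc (c1 * x)) →
      d1 = 1 ∧ d1 = 2 / Real.pi) ∧
    sinc (0 / 2) = 1 ∧ sinc (Real.pi / 2) = 2 / Real.pi := by
  intro c1 bb1 b1
  have hzero : sinc (0 / 2) = 1 := by rw [zero_div, sinc_eq_real_sinc, Real.sinc_zero]
  have hpi : sinc (Real.pi / 2) = 2 / Real.pi := Real.sinc_pi_div_two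
  have forced : ∀ d1 : ℝ, (∀ x : ℝ, 0 ≤ x →
      sinc x * b1 x - Real.cos x * bb1 x = c1 * d1 * sinc (c1 * x)) →
      d1 = 1 ∧ d1 = 2 / Real.pi := by
    intro d1 h
    have at_zero := eq_sinc_half_of_erkn3_symplectic (h 0 le_rfl) (hzero ▸ one_ne_zero)
    have at_pi := eq_sinc_half_of_erkn3_symplectic (h Real.pi Real.pi_pos.le)
      (by rw [hpi]; positivity)
    exact ⟨at_zero.trans hzero, at_pi.trans hpi⟩
  refine ⟨fun x _ => erkn3_symmetry_identity x, fun x _ => by ring,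
    ⟨rfl, fun x _ => (erkn3_symmetry_identity x).symm,
      fun x _ => by simp only [bb1, b1, c1, one_div_mul_eq_div]; ring⟩,
    ?_, forced, hzero, hpi⟩
  rintro ⟨d1, -, h⟩
  obtain ⟨h1, h2⟩ := forced d1 h
  rw [h1, eq_div_iff Real.pi_ne_zero, one_mul] at h2
  linarith [Real.pi_gt_three]
end
end
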